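/- arXiv:1412.0027 — 2 statements merged into one kernel-verified Lean document; each statement's English description precedes it below -/
import Mathlib

section
/- Let α ∈ 𝔻, m ∈ ℕ, and φ be holomorphic on a neighborhood of the closed unit disk. Then for every f holomorphic on a neighborhood of the closed unit disk, ⟨φf, k_{α,m}⟩ = ⟨f, Σ_{i=0}^{m} conj(φ^{(m-i)}(α)/(m-i)!) · k_{α,i}⟩, where k_{α,j}(z) = z^j/(1 - conj(α)z)^{j+1} and ⟨·,·⟩ is the L² inner product on the unit circle with normalized measure. In other words, the adjoint of multiplication by φ maps k_{α,m} to Σ_{i=0}^m conj(φ^{(m-i)}(α)/(m-i)!) · k_{α,i}. -/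
/-!
On the unit circle `conj z = z⁻¹`, so `conj (k_{α,j} z) = z / (z - α) ^ (j + 1)` and `⟨g, k_{α,j}⟩`
is the Cauchy integral `(2πi)⁻¹ ∮ g z / (z - α) ^ (j + 1) dz = g⁽ʲ⁾(α) / j!`. Hence the left side is
the `m`-th Taylor coefficient of `φ f` at `α`, while by conjugate linearity the right side is
`∑ᵢ φ⁽ᵐ⁻ⁱ⁾(α) / (m - i)! · f⁽ⁱ⁾(α) / i!`; the two agree by the Leibniz rule.
Cauchy's formula for derivatives at a point other than the centre is obtained by induction on `j`,
since the derivative of `g z / (z - α) ^ (j + 1)` integrates to zero around the circle.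
-/

open Complex Metric Finset

/-- The Taylor-coefficient reproducing kernel in H². -/
noncomputable def kern (α : ℂ) (m : ℕ) (z : ℂ) : ℂ :=
  z ^ m / (1 - (starRingEnd ℂ) α * z) ^ (m + 1)

open scoped Real ComplexConjugate

theorem iteratedDeriv_mul_div_factorial {𝕜 : Type*} [NontriviallyNormedField 𝕜] [CharZero 𝕜]
    {f g : 𝕜 → 𝕜} {x : 𝕜} {n : ℕ} (hf : ContDiffAt 𝕜 n f x) (hg : ContDiffAt 𝕜 n g x) :
    iteratedDeriv n (fun z => f z * g z) x / n.factorial =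
      ∑ i ∈ range (n + 1),
        iteratedDeriv (n - i) f x / (n - i).factorial * (iteratedDeriv i g x / i.factorial) := by
  simp_rw [mul_comm (f _), iteratedDeriv_fun_mul hg hf, sum_div]
  refine sum_congr rfl fun i hi => ?_
  have hfact : ∀ k : ℕ, (k.factorial : 𝕜) ≠ 0 := fun k => Nat.cast_ne_zero.mpr k.factorial_ne_zero
  rw [Nat.cast_choose 𝕜 (Nat.lt_succ_iff.mp (mem_range.mp hi))]
  field_simp [hfact]

section CauchyFormula

variable {c w : ℂ} {R : ℝ}

theorem hasDerivAt_div_sub_pow {g : ℂ → ℂ} {z : ℂ} (hg : DifferentiableAt ℂ g z) (hz : z ≠ w)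
    (n : ℕ) :
    HasDerivAt (fun u => g u / (u - w) ^ (n + 1))
      (deriv g z / (z - w) ^ (n + 1) - (n + 1) * (g z / (z - w) ^ (n + 2))) z := by
  have hzw : z - w ≠ 0 := sub_ne_zero.mpr hz
  have hpow : HasDerivAt (fun u => (u - w) ^ (n + 1)) ((n + 1) * (z - w) ^ n) z := by
    simpa using ((hasDerivAt_id z).sub_const w).fun_pow (n + 1)
  refine (hg.hasDerivAt.div hpow (pow_ne_zero _ hzw)).congr_deriv ?_
  field_simp
  ring

theorem circleIntegrable_div_sub_pow {g : ℂ → ℂ} (hg : ContinuousOn g (sphere c R))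
    (hw : w ∈ ball c R) (k : ℕ) : CircleIntegrable (fun z => g z / (z - w) ^ k) c R := by
  refine ContinuousOn.circleIntegrable (pos_of_mem_ball hw).le
    (hg.div (by fun_prop) fun z hz => pow_ne_zero _ (sub_ne_zero.mpr ?_))
  rintro rfl
  exact (mem_sphere.mp hz).not_lt (mem_ball.mp hw)

theorem circleIntegral_div_sub_pow_succ {g : ℂ → ℂ} (hg : AnalyticOnNhd ℂ g (closedBall c R))
    (hw : w ∈ ball c R) (n : ℕ) :
    ∮ z in C(c, R), g z / (z - w) ^ (n + 1) = 2 * π * I / n.factorial * iteratedDeriv n g w := by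
  induction n generalizing g with
  | zero =>
    simpa using circleIntegral_div_sub_of_differentiable_on_off_countable Set.countable_empty hw
      hg.continuousOn fun z hz => (hg z (ball_subset_closedBall hz.1)).differentiableAt
  | succ n ih =>
    have hexact : ∮ z in C(c, R),
        (deriv g z / (z - w) ^ (n + 1) - (n + 1) * (g z / (z - w) ^ (n + 2))) = 0 := by
      refine circleIntegral.integral_eq_zero_of_hasDerivWithinAt (pos_of_mem_ball hw).le
        fun z hz => (hasDerivAt_div_sub_pow (hg z (sphere_subset_closedBall hz)).differentiableAt
          ?_ n).hasDerivWithinAt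
      rintro rfl
      exact (mem_sphere.mp hz).not_lt (mem_ball.mp hw)
    have hsphere := sphere_subset_closedBall (x := c) (ε := R)
    have hintegrable : CircleIntegrable (fun z => (n + 1 : ℂ) * (g z / (z - w) ^ (n + 2))) c R := by
      simpa only [smul_eq_mul] using
        (circleIntegrable_div_sub_pow (hg.continuousOn.mono hsphere) hw _).const_fun_smul
          (a := (n + 1 : ℂ))
    rw [circleIntegral.integral_sub
        (circleIntegrable_div_sub_pow (hg.deriv.continuousOn.mono hsphere) hw _) hintegrable,
      circleIntegral.integral_const_mul, ih hg.deriv, sub_eq_zero] at hexact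
    rw [iteratedDeriv_succ', Nat.factorial_succ]
    push_cast
    field_simp at hexact ⊢
    linear_combination -hexact

end CauchyFormula

theorem circleIntegral_unit_eq (h : ℂ → ℂ) :
    ∮ z in C(0, 1), h z = I * ∫ θ in (0 : ℝ)..2 * π, exp (θ * I) * h (exp (θ * I)) := by
  simp only [circleIntegral, deriv_circleMap, circleMap_zero, ofReal_one, one_mul, smul_eq_mul,
    ← intervalIntegral.integral_const_mul]
  exact intervalIntegral.integral_congr fun θ _ => by ring

theorem conj_kern_of_norm_eq_one (α : ℂ) (n : ℕ) {z : ℂ} (hz : ‖z‖ = 1) :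
    conj (kern α n z) = z / (z - α) ^ (n + 1) := by
  have hz0 : z ≠ 0 := norm_ne_zero_iff.mp (by simp [hz])
  have h1 : 1 - α * z⁻¹ = (z - α) * z⁻¹ := by field_simp
  simp only [kern, map_div₀, map_pow, map_sub, map_one, map_mul, conj_conj, ← inv_eq_conj hz, h1,
    mul_pow, inv_pow]
  field_simp
  ring

theorem continuousOn_kern {α : ℂ} (hα : ‖α‖ < 1) (n : ℕ) :
    ContinuousOn (kern α n) (closedBall 0 1) := by
  refine ContinuousOn.div (by fun_prop) (by fun_prop) fun z hz => pow_ne_zero _ fun h => ?_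
  have hz : ‖z‖ ≤ 1 := mem_closedBall_zero_iff.mp hz
  have : ‖conj α * z‖ < 1 := by
    rw [norm_mul, RCLike.norm_conj]
    nlinarith [norm_nonneg α, norm_nonneg z]
  rw [← sub_eq_zero.mp h, norm_one] at this
  exact this.false

/-- The inner product `⟨g, h⟩` of the statement. -/
noncomputable def circleInner (g h : ℂ → ℂ) : ℂ :=
  (2 * Real.pi)⁻¹ • ∫ θ in (0 : ℝ)..(2 * Real.pi), g (exp (θ * I)) * conj (h (exp (θ * I)))

theorem ContinuousOn.continuous_comp_exp_mul_I {g : ℂ → ℂ} (hg : ContinuousOn g (sphere 0 1)) :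
    Continuous fun θ : ℝ => g (exp (θ * I)) :=
  hg.comp_continuous (by fun_prop) fun θ => by simp [norm_exp_ofReal_mul_I]

theorem circleInner_sum_right {ι : Type*} (s : Finset ι) {g : ℂ → ℂ} (c : ι → ℂ)
    {h : ι → ℂ → ℂ} (hg : ContinuousOn g (sphere 0 1))
    (hh : ∀ i ∈ s, ContinuousOn (h i) (sphere 0 1)) :
    circleInner g (fun z => ∑ i ∈ s, c i * h i z) = ∑ i ∈ s, conj (c i) * circleInner g (h i) := by
  simp only [circleInner, map_sum, map_mul, mul_sum, mul_left_comm (g _)]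
  rw [intervalIntegral.integral_finsetSum, smul_sum]
  · simp only [intervalIntegral.integral_const_mul, mul_smul_comm]
  · exact fun i hi => (continuous_const.mul (hg.continuous_comp_exp_mul_I.mul
      (hh i hi).continuous_comp_exp_mul_I.star)).intervalIntegrable _ _

theorem circleInner_kern {g : ℂ → ℂ} (hg : AnalyticOnNhd ℂ g (closedBall 0 1)) {α : ℂ}
    (hα : α ∈ ball 0 1) (n : ℕ) : circleInner g (kern α n) = iteratedDeriv n g α / n.factorial := by
  have hcauchy := circleIntegral_unit_eq fun z => g z / (z - α) ^ (n + 1)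
  rw [circleIntegral_div_sub_pow_succ hg hα n] at hcauchy
  have hintegrand : ∀ θ : ℝ, g (exp (θ * I)) * conj (kern α n (exp (θ * I))) =
      exp (θ * I) * (g (exp (θ * I)) / (exp (θ * I) - α) ^ (n + 1)) := fun θ => by
    rw [conj_kern_of_norm_eq_one α n (norm_exp_ofReal_mul_I θ)]
    ring
  have hintegral : ∫ θ in (0 : ℝ)..2 * π,
      exp (θ * I) * (g (exp (θ * I)) / (exp (θ * I) - α) ^ (n + 1)) =
        2 * π * (iteratedDeriv n g α / n.factorial) :=
    mul_left_cancel₀ I_ne_zero (by rw [← hcauchy]; ring)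
  rw [circleInner, intervalIntegral.integral_congr fun θ _ => hintegrand θ, hintegral, real_smul]
  push_cast
  field_simp

theorem stmt5 (α : ℂ) (hα : ‖α‖ < 1) (m : ℕ) (φ : ℂ → ℂ) (U : Set ℂ) (hU : IsOpen U)
    (hUD : closedBall (0:ℂ) 1 ⊆ U) (hφ : DifferentiableOn ℂ φ U)
    (f : ℂ → ℂ) (V : Set ℂ) (hV : IsOpen V) (hVD : closedBall (0:ℂ) 1 ⊆ V)
    (hf : DifferentiableOn ℂ f V) :
    (2 * Real.pi)⁻¹ • ∫ θ in (0:ℝ)..(2 * Real.pi),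
        (φ (Complex.exp (θ * Complex.I)) * f (Complex.exp (θ * Complex.I))) *
          (starRingEnd ℂ) (kern α m (Complex.exp (θ * Complex.I))) =
      (2 * Real.pi)⁻¹ • ∫ θ in (0:ℝ)..(2 * Real.pi),
        f (Complex.exp (θ * Complex.I)) *
          (starRingEnd ℂ) (∑ i ∈ Finset.range (m + 1),
            (starRingEnd ℂ) (iteratedDeriv (m - i) φ α / ((m - i).factorial : ℂ)) *
              kern α i (Complex.exp (θ * Complex.I))) := by
  have hαD : α ∈ ball (0 : ℂ) 1 := mem_ball_zero_iff.mpr hα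
  have hφD : AnalyticOnNhd ℂ φ (closedBall 0 1) := (hφ.analyticOnNhd hU).mono hUD
  have hfD : AnalyticOnNhd ℂ f (closedBall 0 1) := (hf.analyticOnNhd hV).mono hVD
  change circleInner (fun z => φ z * f z) (kern α m) = circleInner f fun z =>
    ∑ i ∈ range (m + 1), conj (iteratedDeriv (m - i) φ α / (m - i).factorial) * kern α i z
  rw [circleInner_kern (hφD.mul hfD) hαD, circleInner_sum_right _ _
    (hfD.continuousOn.mono sphere_subset_closedBall)
    fun i _ => (continuousOn_kern hα i).mono sphere_subset_closedBall]
  simp only [conj_conj, circleInner_kern hfD hαD]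
  have hαD' := ball_subset_closedBall hαD
  exact iteratedDeriv_mul_div_factorial (hφD α hαD').contDiffAt (hfD α hαD').contDiffAt
end

section
/- For α, β ∈ 𝔻 and m, n ∈ ℕ, the H² inner product ⟨k_{α,m}, k_{β,n}⟩ equals the complex conjugate of the coefficient a_{mn} in the double expansion 1/(1 − z conj(ζ)) = Σ_{k,l≥0} a_{kl} (z−α)^k conj(ζ−β)^l. Consequently, the Gram matrix G of the kernels {k_{α_i,m}} equals the entrywise conjugate of Takahashi's matrix Γ built from these coefficients. -/
/-
Both sides equal `∑ j, C(j,m) C(j,n) conj(α)^(j-m) β^(j-n)`. On the unit circle the kernels are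
power series with absolutely summable coefficients `C(j,m) conj(α)^(j-m)`, so orthogonality of the
characters `e^{ijθ}` turns the inner product into this sum. For the coefficients, fix `ζ` near `β`
and compare the expansion of `z ↦ 1/(1 - z conj ζ)` about `α` given by the hypothesis with the
geometric one, whose `k`-th coefficient is `conj (kern α k ζ)`: this shows that the
`conj (a m l)` are the Taylor coefficients of `kern α m` at `β`, and recentring its power series
from `0` to `β` computes them as the same sum.
-/

open Complex Metric

open ComplexConjugate

theorem eq_of_hasSum_mul_pow {𝕜 : Type*} [NontriviallyNormedField 𝕜] {c d : ℕ → 𝕜} {s : 𝕜 → 𝕜}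
    {r : ℝ} (hr : 0 < r)
    (hc : ∀ w : 𝕜, ‖w‖ < r → HasSum (fun k => c k * w ^ k) (s w))
    (hd : ∀ w : 𝕜, ‖w‖ < r → HasSum (fun k => d k * w ^ k) (s w)) : c = d := by
  obtain ⟨w₀, hw₀, hw₀r⟩ := NormedField.exists_norm_lt 𝕜 hr
  have hzero : ∀ w : 𝕜, ‖w‖ < r → HasSum (fun k => (c - d) k * w ^ k) 0 := fun w hw => by
    simpa [sub_mul] using (hc w hw).sub (hd w hw)
  have hseries : HasFPowerSeriesOnBall 0 (FormalMultilinearSeries.ofScalars 𝕜 (c - d)) 0 ‖w₀‖₊ :=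
    { r_le := by
        refine FormalMultilinearSeries.le_radius_of_tendsto _ (l := 0) ?_
        simpa [FormalMultilinearSeries.ofScalars_norm] using
          (hzero w₀ hw₀r).summable.tendsto_atTop_zero.norm
      r_pos := by simpa using hw₀
      hasSum := fun {y} hy => by
        have hy : ‖y‖ < ‖w₀‖ := by simpa using hy
        simpa [FormalMultilinearSeries.ofScalars_apply_eq, mul_comm] using
          hzero y (hy.trans hw₀r) }
  exact sub_eq_zero.mp <| FormalMultilinearSeries.ofScalars_series_injective 𝕜 𝕜
    (by simpa using hseries.hasFPowerSeriesAt.eq_zero)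

theorem hasSum_choose_mul_pow_mul_pow {R : Type*} [CommSemiring R] [TopologicalSpace R]
    (x y : R) (j : ℕ) : HasSum (fun l => j.choose l * x ^ (j - l) * y ^ l) ((x + y) ^ j) := by
  rw [add_comm, add_pow]
  refine (hasSum_sum_of_ne_finset_zero fun l hl => ?_).congr_fun fun l => ?_
  · rw [Nat.choose_eq_zero_of_lt (by simpa using hl), Nat.cast_zero, mul_zero]
  · ring

theorem hasSum_tsum_mul_choose_mul_pow {𝕜 : Type*} [NormedField 𝕜] [CompleteSpace 𝕜]
    {c : ℕ → 𝕜} {β w : 𝕜} (h : Summable fun j => ‖c j‖ * (‖β‖ + ‖w‖) ^ j) :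
    HasSum (fun l => (∑' j, c j * (j.choose l * β ^ (j - l))) * w ^ l)
      (∑' j, c j * (β + w) ^ j) := by
  set V : ℕ × ℕ → 𝕜 := fun jl => c jl.1 * (jl.1.choose jl.2 * β ^ (jl.1 - jl.2) * w ^ jl.2)
  set B : ℕ × ℕ → ℝ := fun jl => ‖c jl.1‖ * (jl.1.choose jl.2 * ‖β‖ ^ (jl.1 - jl.2) * ‖w‖ ^ jl.2)
  have hfiber : ∀ j, HasSum (fun l => V (j, l)) (c j * (β + w) ^ j) := fun j =>
    (hasSum_choose_mul_pow_mul_pow β w j).mul_left (c j)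
  have hfiber_bound : ∀ j, HasSum (fun l => B (j, l)) (‖c j‖ * (‖β‖ + ‖w‖) ^ j) := fun j =>
    (hasSum_choose_mul_pow_mul_pow ‖β‖ ‖w‖ j).mul_left ‖c j‖
  have hB : Summable B :=
    (summable_prod_of_nonneg fun _ => by positivity).mpr
      ⟨fun j => (hfiber_bound j).summable, h.congr fun j => (hfiber_bound j).tsum_eq.symm⟩
  have hV : Summable V := hB.of_norm_bounded fun jl => by
    simp only [V, B, norm_mul, norm_pow]
    gcongr
    simpa using Nat.norm_cast_le (α := 𝕜) (jl.1.choose jl.2)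
  have hvalue : ∑' j, c j * (β + w) ^ j = ∑' l, ∑' j, V (j, l) := by
    rw [Summable.tsum_comm (f := fun j l => V (j, l)) hV]
    exact tsum_congr fun j => (hfiber j).tsum_eq.symm
  rw [hvalue]
  refine hV.prod_symm.prod.hasSum.congr_fun fun l => ?_
  rw [← tsum_mul_right]
  exact tsum_congr fun j => by simp only [V, Prod.swap_prod_mk]; ring

theorem hasSum_choose_mul_pow_sub_mul_pow {𝕜 : Type*} [NormedField 𝕜] [CompleteSpace 𝕜]
    (m : ℕ) {a z : 𝕜} (h : ‖a * z‖ < 1) :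
    HasSum (fun j => (j.choose m : 𝕜) * a ^ (j - m) * z ^ j) (z ^ m / (1 - a * z) ^ (m + 1)) := by
  rw [← hasSum_nat_add_iff' m]
  have hvanish : ∑ j ∈ Finset.range m, (j.choose m : 𝕜) * a ^ (j - m) * z ^ j = 0 :=
    Finset.sum_eq_zero fun j hj => by
      simp [Nat.choose_eq_zero_of_lt (Finset.mem_range.mp hj)]
  have hterm : ∀ p : ℕ, ((p + m).choose m : 𝕜) * a ^ (p + m - m) * z ^ (p + m)
      = (p + m).choose m * (a * z) ^ p * z ^ m := fun p => by
    rw [Nat.add_sub_cancel, pow_add, mul_pow]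
    ring
  simpa only [hvanish, sub_zero, hterm, div_eq_mul_one_div (z ^ m), mul_comm (z ^ m)] using
    (hasSum_choose_mul_geometric_of_norm_lt_one m h).mul_right (z ^ m)

theorem integral_exp_pow_mul_conj_pow (j k : ℕ) :
    ∫ θ in (0 : ℝ)..2 * Real.pi, exp (θ * I) ^ j * conj (exp (θ * I)) ^ k =
      if j = k then ((2 * Real.pi : ℝ) : ℂ) else 0 := by
  have hexp : ∀ θ : ℝ, exp (θ * I) ^ j * conj (exp (θ * I)) ^ k
      = exp ((((j : ℤ) - k : ℤ) * I) * θ) := fun θ => by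
    rw [← exp_conj, map_mul, conj_ofReal, conj_I, ← exp_nat_mul, ← exp_nat_mul, ← exp_add]
    push_cast
    ring_nf
  simp_rw [hexp]
  split_ifs with hjk
  · simp [hjk]
  · have hne : ((j : ℤ) - k : ℤ) * I ≠ 0 := by
      simpa [sub_eq_zero, I_ne_zero] using hjk
    rw [integral_exp_mul_complex hne]
    have hperiod : exp ((((j : ℤ) - k : ℤ) * I) * ((2 * Real.pi : ℝ) : ℂ)) = 1 := by
      rw [← exp_int_mul_two_pi_mul_I ((j : ℤ) - k)]
      push_cast
      ring_nf
    rw [hperiod, ofReal_zero, mul_zero, exp_zero, sub_self, zero_div]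

theorem hasSum_mul_conj_of_hasSum_exp {c d : ℕ → ℂ} {f g : ℝ → ℂ}
    (hc : Summable fun j => ‖c j‖) (hd : Summable fun k => ‖d k‖)
    (hf : ∀ θ : ℝ, HasSum (fun j => c j * exp (θ * I) ^ j) (f θ))
    (hg : ∀ θ : ℝ, HasSum (fun k => d k * exp (θ * I) ^ k) (g θ)) :
    HasSum (fun j => c j * conj (d j))
      ((2 * Real.pi)⁻¹ • ∫ θ in (0 : ℝ)..2 * Real.pi, f θ * conj (g θ)) := by
  set F : ℕ × ℕ → ℝ → ℂ := fun jk θ =>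
    c jk.1 * exp (θ * I) ^ jk.1 * conj (d jk.2 * exp (θ * I) ^ jk.2)
  have hnorm : ∀ jk θ, ‖F jk θ‖ = ‖c jk.1‖ * ‖d jk.2‖ := fun jk θ => by
    simp [F, norm_exp_ofReal_mul_I]
  have hbound : Summable fun jk : ℕ × ℕ => ‖c jk.1‖ * ‖d jk.2‖ :=
    hc.mul_of_nonneg hd (fun _ => norm_nonneg _) (fun _ => norm_nonneg _)
  have hlim : ∀ θ, HasSum (fun jk => F jk θ) (f θ * conj (g θ)) := fun θ =>
    HasSum.mul (f := fun j => c j * exp (θ * I) ^ j) (g := fun k => conj (d k * exp (θ * I) ^ k))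
      (hf θ) ((hg θ).map (starRingEnd ℂ) continuous_conj)
      (.of_norm_bounded hbound fun jk => (hnorm jk θ).le)
  have hterm : HasSum (fun jk => ∫ θ in (0 : ℝ)..2 * Real.pi, F jk θ)
      (∫ θ in (0 : ℝ)..2 * Real.pi, f θ * conj (g θ)) :=
    intervalIntegral.hasSum_integral_of_dominated_convergence
      (fun jk _ => ‖c jk.1‖ * ‖d jk.2‖)
      (fun jk => (by fun_prop : Continuous (F jk)).aestronglyMeasurable)
      (fun jk => .of_forall fun θ _ => (hnorm jk θ).le) (.of_forall fun _ _ => hbound)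
      intervalIntegrable_const (.of_forall fun θ _ => hlim θ)
  have hintegral : ∀ jk : ℕ × ℕ, ∫ θ in (0 : ℝ)..2 * Real.pi, F jk θ
      = if jk.1 = jk.2 then ((2 * Real.pi : ℝ) : ℂ) * (c jk.1 * conj (d jk.1)) else 0 := by
    rintro ⟨j, k⟩
    simp only [F, map_mul, map_pow]
    simp_rw [show ∀ θ : ℝ, c j * exp (θ * I) ^ j * (conj (d k) * conj (exp (θ * I)) ^ k)
      = c j * conj (d k) * (exp (θ * I) ^ j * conj (exp (θ * I)) ^ k) from fun θ => by ring]
    rw [intervalIntegral.integral_const_mul, integral_exp_pow_mul_conj_pow]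
    split_ifs with hjk
    · subst hjk; ring
    · rw [mul_zero]
  simp_rw [hintegral] at hterm
  have hdiag : HasSum (fun j => ((2 * Real.pi : ℝ) : ℂ) * (c j * conj (d j)))
      (∫ θ in (0 : ℝ)..2 * Real.pi, f θ * conj (g θ)) := by
    refine ((Function.Injective.hasSum_iff (g := fun j => (j, j))
      (fun _ _ h => (Prod.mk.inj h).1) fun jk hjk => ?_).mpr hterm).congr_fun fun j => ?_
    · exact if_neg fun h => hjk ⟨jk.1, Prod.ext rfl h⟩
    · simp
  rw [real_smul]
  simpa [← mul_assoc, Real.pi_ne_zero] using hdiag.mul_left ((2 * Real.pi : ℝ) : ℂ)⁻¹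

-- For `j < m` the truncated exponent `j - m` is harmless, since `j.choose m = 0`.
noncomputable def kernCoeff (α : ℂ) (m j : ℕ) : ℂ :=
  j.choose m * conj α ^ (j - m)

theorem hasSum_kernCoeff_mul_pow {α z : ℂ} (h : ‖α‖ * ‖z‖ < 1) (m : ℕ) :
    HasSum (fun j => kernCoeff α m j * z ^ j) (kern α m z) :=
  hasSum_choose_mul_pow_sub_mul_pow m (by simpa using h)

theorem summable_norm_kernCoeff_mul_pow {α : ℂ} {r : ℝ} (hr : 0 ≤ r) (h : ‖α‖ * r < 1)
    (m : ℕ) : Summable fun j => ‖kernCoeff α m j‖ * r ^ j := by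
  refine (hasSum_choose_mul_pow_sub_mul_pow m (a := ‖α‖) (z := r) ?_).summable.congr fun j => ?_
  · rwa [Real.norm_of_nonneg (by positivity)]
  · simp [kernCoeff]

theorem conj_kernCoeff (β : ℂ) (n j : ℕ) : conj (kernCoeff β n j) = j.choose n * β ^ (j - n) := by
  simp [kernCoeff]

theorem hasSum_kern_add {α β w : ℂ} (h : ‖α‖ * (‖β‖ + ‖w‖) < 1) (m : ℕ) :
    HasSum (fun l => (∑' j, kernCoeff α m j * conj (kernCoeff β l j)) * w ^ l)
      (kern α m (β + w)) := by
  have hβw : ‖α‖ * ‖β + w‖ < 1 :=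
    (mul_le_mul_of_nonneg_left (norm_add_le β w) (norm_nonneg α)).trans_lt h
  simpa only [conj_kernCoeff, (hasSum_kernCoeff_mul_pow hβw m).tsum_eq] using
    hasSum_tsum_mul_choose_mul_pow (summable_norm_kernCoeff_mul_pow (by positivity) h m)

theorem hasSum_conj_kern_mul_pow {α ζ z : ℂ} (h : ‖ζ‖ * (‖α‖ + ‖z - α‖) < 1) :
    HasSum (fun k => conj (kern α k ζ) * (z - α) ^ k) (1 / (1 - z * conj ζ)) := by
  set q : ℂ := 1 - α * conj ζ
  have hq : ‖ζ‖ * ‖z - α‖ < ‖q‖ := calc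
    ‖ζ‖ * ‖z - α‖ < 1 - ‖α * conj ζ‖ := by rw [norm_mul, RCLike.norm_conj]; linarith
    _ ≤ ‖q‖ := by simpa using norm_sub_norm_le (1 : ℂ) (α * conj ζ)
  have hq0 : q ≠ 0 := norm_pos_iff.mp ((by positivity : 0 ≤ ‖ζ‖ * ‖z - α‖).trans_lt hq)
  set u : ℂ := conj ζ * (z - α) / q
  have hu : ‖u‖ < 1 := by
    rwa [norm_div, norm_mul, RCLike.norm_conj, div_lt_one (norm_pos_iff.mpr hq0)]
  have hsum : 1 / (1 - z * conj ζ) = q⁻¹ * (1 - u)⁻¹ := by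
    rw [one_div, ← mul_inv, mul_sub, mul_one, mul_div_cancel₀ _ hq0]
    congr 1
    ring
  rw [hsum]
  refine ((hasSum_geometric_of_norm_lt_one hu).mul_left q⁻¹).congr_fun fun k => ?_
  simp only [kern, map_div₀, map_pow, map_sub, map_one, map_mul, conj_conj, u, q]
  rw [div_pow, mul_pow, pow_succ]
  field_simp

theorem hasSum_coeff_mul_conj_pow {α β : ℂ} (hα : ‖α‖ < 1) {a : ℕ → ℕ → ℂ} {ε : ℝ} (hε : 0 < ε)
    (hsum : ∀ z ζ : ℂ, ‖z - α‖ < ε → ‖ζ - β‖ < ε →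
      HasSum (fun p : ℕ × ℕ => a p.1 p.2 * (z - α) ^ p.1 * conj (ζ - β) ^ p.2)
        (1 / (1 - z * conj ζ)))
    {ζ : ℂ} (hζβ : ‖ζ - β‖ < ε) (hζ : ‖ζ‖ < 1) (k : ℕ) :
    HasSum (fun l => a k l * conj (ζ - β) ^ l) (conj (kern α k ζ)) := by
  set C := conj (ζ - β)
  have hsum_at : ∀ w : ℂ, ‖w‖ < ε → HasSum (fun p : ℕ × ℕ => a p.1 p.2 * C ^ p.2 * w ^ p.1)
      (1 / (1 - (α + w) * conj ζ)) := fun w hw => by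
    simpa only [add_sub_cancel_left, mul_right_comm _ (w ^ _)] using hsum (α + w) ζ (by simpa) hζβ
  have hrow : ∀ w : ℂ, ‖w‖ < ε → ∀ k, Summable fun l => a k l * C ^ l * w ^ k :=
    fun w hw k => (hsum_at w hw).summable.prod_factor k
  set r := min ε (1 - ‖α‖)
  have hr : 0 < r := lt_min hε (by linarith)
  have hrow_sum : ∀ w : ℂ, ‖w‖ < r →
      HasSum (fun k => (∑' l, a k l * C ^ l) * w ^ k) (1 / (1 - (α + w) * conj ζ)) :=
    fun w hw => (hsum_at w (hw.trans_le (min_le_left _ _))).prod_fiberwise fun k => by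
      simpa only [tsum_mul_right] using (hrow w (hw.trans_le (min_le_left _ _)) k).hasSum
  have hgeom : ∀ w : ℂ, ‖w‖ < r →
      HasSum (fun k => conj (kern α k ζ) * w ^ k) (1 / (1 - (α + w) * conj ζ)) := fun w hw => by
    have hαw : ‖α‖ + ‖(α + w) - α‖ < 1 := by
      rw [add_sub_cancel_left]
      linarith [hw.trans_le (min_le_right ε (1 - ‖α‖))]
    have h := hasSum_conj_kern_mul_pow
      (mul_lt_one_of_nonneg_of_lt_one_left (norm_nonneg ζ) hζ hαw.le)
    rwa [add_sub_cancel_left] at h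
  have hcoeff := congrFun (eq_of_hasSum_mul_pow hr hrow_sum hgeom) k
  obtain ⟨w₀, hw₀, hw₀r⟩ := NormedField.exists_norm_lt ℂ hr
  have hsummable : Summable fun l => a k l * C ^ l := (summable_mul_right_iff
    (pow_ne_zero k (norm_pos_iff.mp hw₀))).mp (hrow w₀ (hw₀r.trans_le (min_le_left _ _)) k)
  simpa only [hcoeff] using hsummable.hasSum

theorem conj_coeff_eq_tsum_kernCoeff_mul_conj {α β : ℂ} (hα : ‖α‖ < 1) (hβ : ‖β‖ < 1)
    {a : ℕ → ℕ → ℂ} {ε : ℝ} (hε : 0 < ε)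
    (hsum : ∀ z ζ : ℂ, ‖z - α‖ < ε → ‖ζ - β‖ < ε →
      HasSum (fun p : ℕ × ℕ => a p.1 p.2 * (z - α) ^ p.1 * conj (ζ - β) ^ p.2)
        (1 / (1 - z * conj ζ)))
    (m n : ℕ) : conj (a m n) = ∑' j, kernCoeff α m j * conj (kernCoeff β n j) := by
  set r := min ε (1 - ‖β‖)
  have hr : 0 < r := lt_min hε (by linarith)
  have hβw : ∀ w : ℂ, ‖w‖ < r → ‖β‖ + ‖w‖ < 1 := fun w hw => by
    linarith [hw.trans_le (min_le_right ε (1 - ‖β‖))]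
  have hcoeff : ∀ w : ℂ, ‖w‖ < r → HasSum (fun l => conj (a m l) * w ^ l) (kern α m (β + w)) :=
    fun w hw => by
      have h := hasSum_coeff_mul_conj_pow hα hε hsum (ζ := β + w)
        (by simpa using hw.trans_le (min_le_left _ _))
        ((norm_add_le β w).trans_lt (hβw w hw)) m
      simpa [Function.comp_def] using h.map (starRingEnd ℂ) continuous_conj
  have htaylor : ∀ w : ℂ, ‖w‖ < r → HasSum
      (fun l => (∑' j, kernCoeff α m j * conj (kernCoeff β l j)) * w ^ l) (kern α m (β + w)) :=
    fun w hw => hasSum_kern_add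
      (mul_lt_one_of_nonneg_of_lt_one_left (norm_nonneg α) hα (hβw w hw).le) m
  exact congrFun (eq_of_hasSum_mul_pow hr hcoeff htaylor) n

theorem stmt11 (α β : ℂ) (hα : ‖α‖ < 1) (hβ : ‖β‖ < 1) (a : ℕ → ℕ → ℂ)
    (ε : ℝ) (hε : 0 < ε)
    (hsum : ∀ z ζ : ℂ, ‖z - α‖ < ε → ‖ζ - β‖ < ε →
      HasSum (fun p : ℕ × ℕ =>
        a p.1 p.2 * (z - α) ^ p.1 * ((starRingEnd ℂ) (ζ - β)) ^ p.2)
        (1 / (1 - z * (starRingEnd ℂ) ζ)))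
    (m n : ℕ) :
    (2 * Real.pi)⁻¹ • ∫ θ in (0:ℝ)..(2 * Real.pi),
        kern α m (Complex.exp (θ * Complex.I)) *
          (starRingEnd ℂ) (kern β n (Complex.exp (θ * Complex.I))) =
      (starRingEnd ℂ) (a m n) := by
  have hsummable : ∀ {γ : ℂ}, ‖γ‖ < 1 → ∀ k, Summable fun j => ‖kernCoeff γ k j‖ :=
    fun hγ k => by
      simpa using summable_norm_kernCoeff_mul_pow zero_le_one (by simpa using hγ) k
  have hcircle : ∀ {γ : ℂ}, ‖γ‖ < 1 → ∀ k (θ : ℝ),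
      HasSum (fun j => kernCoeff γ k j * exp (θ * I) ^ j) (kern γ k (exp (θ * I))) :=
    fun hγ k θ => hasSum_kernCoeff_mul_pow (by simpa [norm_exp_ofReal_mul_I] using hγ) k
  rw [conj_coeff_eq_tsum_kernCoeff_mul_conj hα hβ hε hsum m n]
  exact (hasSum_mul_conj_of_hasSum_exp (hsummable hα m) (hsummable hβ n) (hcircle hα m)
    (hcircle hβ n)).tsum_eq.symm
end
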